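/- Let κ > 0, μ > 0, m > 0 and h̄ > 0 with θ₁ = h̄/(μ(1+κ)) and θ₂ = (μκ+m)h̄/(μ(1+κ)m), and suppose μκ < m (so that the Gauss hypergeometric series below converges). Then for every real j > 0, the j-th moment of the κ-μ shadowed density satisfies ∫₀^∞ x^j f(x) dx = (θ₁^{m−μ} Γ(μ+j) / (θ₂^{m−μ−j} Γ(μ))) · ₂F₁(μ−m, μ+j; μ; −μκ/m). -/

import Mathlib

open Real MeasureTheory Set Filter

/-- Pochhammer symbol `(a)_n = Γ(a+n)/Γ(a)`. -/
noncomputable def poch (a : ℝ) : ℕ → ℝ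
  | 0 => 1
  | n + 1 => poch a n * (a + n)

/-- Confluent hypergeometric function `₁F₁(a; b; x) = Σ ((a)_n/(b)_n) xⁿ/n!`. -/
noncomputable def hyp1F1 (a b x : ℝ) : ℝ :=
  ∑' n : ℕ, (poch a n / poch b n) * x ^ n / n.factorial

/-- Gauss hypergeometric function `₂F₁(a, b; c; x) = Σ ((a)_n (b)_n/(c)_n) xⁿ/n!`. -/
noncomputable def hyp2F1 (a b c x : ℝ) : ℝ :=
  ∑' n : ℕ, (poch a n * poch b n / poch c n) * x ^ n / n.factorial

/-- The κ-μ shadowed probability density on `(0, ∞)`, with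
`θ₁ = h̄/(μ(1+κ))` and `θ₂ = (μκ+m)h̄/(μ(1+κ)m)`:
`f(x) = (θ₁^(m−μ)/(θ₂^m Γ(μ))) x^(μ−1) e^(−x/θ₁) ₁F₁(m; μ; ((θ₂−θ₁)/(θ₁θ₂)) x)`. -/
noncomputable def kmuPDF (κ μ m hbar x : ℝ) : ℝ :=
  (hbar / (μ * (1 + κ))) ^ (m - μ) /
      (((μ * κ + m) * hbar / (μ * (1 + κ) * m)) ^ m * Real.Gamma μ) *
    x ^ (μ - 1) * Real.exp (-x / (hbar / (μ * (1 + κ)))) *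
    hyp1F1 m μ
      (((((μ * κ + m) * hbar / (μ * (1 + κ) * m)) - hbar / (μ * (1 + κ))) /
        ((hbar / (μ * (1 + κ))) * ((μ * κ + m) * hbar / (μ * (1 + κ) * m)))) * x)

/-!
Kummer's transformation `₁F₁(m; μ; c x) = e^{c x} ₁F₁(μ - m; μ; -c x)`, with
`c = (θ₂ - θ₁) / (θ₁ θ₂)`, turns `x ^ j f(x)` into `x ^ (μ + j - 1) e^{-x/θ₂}` times a power series
in `x`. Integrating term by term gives the Gamma integrals `θ₂ ^ (μ + j + n) Γ(μ + j + n)`, and the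
resulting series is `₂F₁(μ - m, μ + j; μ; -c θ₂)` with `c θ₂ = μκ / m`; the condition `μκ < m` is
what makes this series converge absolutely, which justifies the interchange of sum and integral.
Kummer's transformation itself is the Cauchy product of the exponential series with the `₁F₁`
series, collapsed by the Chu–Vandermonde identity.
-/

open Topology
open Finset.HasAntidiagonal (antidiagonal mem_antidiagonal)
open Polynomial (ascPochhammer_smeval_eq_eval descPochhammer_smeval_eq_ascPochhammer)

lemma poch_eq_ascPochhammer_eval (a : ℝ) (n : ℕ) : poch a n = (ascPochhammer ℝ n).eval a := by
  induction n with
  | zero => simp [poch]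
  | succ n ih => rw [poch, ih, ascPochhammer_succ_eval]

lemma poch_pos {a : ℝ} (ha : 0 < a) (n : ℕ) : 0 < poch a n := by
  rw [poch_eq_ascPochhammer_eval]
  exact ascPochhammer_pos n a ha

lemma poch_add (a : ℝ) (k l : ℕ) : poch a (k + l) = poch a k * poch (a + k) l := by
  induction l with
  | zero => simp [poch]
  | succ l ih =>
    rw [← add_assoc, poch, ih, poch, Nat.cast_add]
    ring

lemma Gamma_add_nat_eq_mul_poch {s : ℝ} (hs : 0 < s) (n : ℕ) :
    Gamma (s + n) = Gamma s * poch s n := by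
  induction n with
  | zero => simp [poch]
  | succ n ih =>
    rw [Nat.cast_succ, ← add_assoc, Gamma_add_one (by positivity), ih, poch]
    ring

lemma poch_neg_sub_add_one (c : ℝ) (n : ℕ) : poch (-c - n + 1) n = (-1) ^ n * poch c n := by
  rw [poch_eq_ascPochhammer_eval, poch_eq_ascPochhammer_eval,
    ← descPochhammer_eval_eq_ascPochhammer, ← neg_neg c, ascPochhammer_eval_neg_eq_descPochhammer,
    neg_neg, ← mul_assoc, ← mul_pow]
  norm_num

-- Chu–Vandermonde, in descending form at `b + n - 1` and `-c`.
lemma poch_sub_eq_sum_antidiagonal (b c : ℝ) (n : ℕ) :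
    poch (b - c) n = ∑ kl ∈ antidiagonal n,
      (n.choose kl.1 : ℝ) * (poch (b + kl.2) kl.1 * ((-1) ^ kl.2 * poch c kl.2)) := by
  have hdesc (t : ℝ) (k : ℕ) : (descPochhammer ℤ k).smeval t = poch (t - k + 1) k := by
    rw [descPochhammer_smeval_eq_ascPochhammer, ascPochhammer_smeval_eq_eval,
      poch_eq_ascPochhammer_eval]
  have hsum := Ring.descPochhammer_smeval_add (r := b + n - 1) (s := -c) n (Commute.all _ _)
  rw [hdesc, show b + n - 1 + -c - n + 1 = b - c by ring] at hsum
  rw [hsum]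
  refine Finset.sum_congr rfl fun kl hkl => ?_
  have hn : (kl.1 : ℝ) + kl.2 = n := by exact_mod_cast mem_antidiagonal.mp hkl
  rw [hdesc, hdesc, poch_neg_sub_add_one, show b + n - 1 - kl.1 + 1 = b + kl.2 by linarith]

lemma summable_of_eq_mul_of_tendsto {f r : ℕ → ℝ} {L : ℝ} (hf : ∀ n, f (n + 1) = r n * f n)
    (hr : Tendsto r atTop (𝓝 L)) (hL : |L| < 1) : Summable f := by
  obtain ⟨q, hLq, hq⟩ := exists_between hL
  refine summable_of_ratio_norm_eventually_le hq ?_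
  filter_upwards [(continuous_abs.tendsto L).comp hr |>.eventually_lt_const hLq] with n hn
  rw [hf, norm_mul, Real.norm_eq_abs]
  exact mul_le_mul_of_nonneg_right hn.le (norm_nonneg _)

lemma tendsto_add_div_add_atTop (a b : ℝ) :
    Tendsto (fun n : ℕ => (a + n) / (b + n)) atTop (𝓝 1) := by
  simpa using tendsto_add_mul_div_add_mul_atTop_nhds a b (1 : ℝ) one_ne_zero

lemma summable_hyp1F1_term (a : ℝ) {b : ℝ} (hb : 0 < b) (x : ℝ) :
    Summable fun n : ℕ => poch a n / poch b n * x ^ n / n.factorial := by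
  refine summable_of_eq_mul_of_tendsto (L := 0)
    (r := fun n => (a + n) / (b + n) * (x / (1 + n))) (fun n => ?_) ?_ (by simp)
  · have := (poch_pos hb n).ne'
    have : b + n ≠ 0 := by positivity
    rw [poch, poch, Nat.factorial_succ]
    push_cast
    field_simp
    ring
  · simpa using (tendsto_add_div_add_atTop a b).mul
      (tendsto_const_nhds.div_atTop (tendsto_atTop_add_const_left _ 1 tendsto_natCast_atTop_atTop))

lemma summable_hyp2F1_term (a b : ℝ) {c x : ℝ} (hc : 0 < c) (hx : |x| < 1) :
    Summable fun n : ℕ => poch a n * poch b n / poch c n * x ^ n / n.factorial := by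
  refine summable_of_eq_mul_of_tendsto
    (r := fun n => (a + n) / (c + n) * ((b + n) / (1 + n)) * x) (fun n => ?_) ?_ hx
  · have := (poch_pos hc n).ne'
    have : c + n ≠ 0 := by positivity
    rw [poch, poch, poch, Nat.factorial_succ]
    push_cast
    field_simp
    ring
  · simpa using ((tendsto_add_div_add_atTop a c).mul (tendsto_add_div_add_atTop b 1)).mul_const x

lemma sum_antidiagonal_exp_term_mul_hyp1F1_term (a : ℝ) {b : ℝ} (hb : 0 < b) (y : ℝ) (n : ℕ) :
    ∑ kl ∈ antidiagonal n, y ^ kl.1 / kl.1.factorial *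
        (poch (b - a) kl.2 / poch b kl.2 * (-y) ^ kl.2 / kl.2.factorial)
      = poch a n / poch b n * y ^ n / n.factorial := by
  have hterm : ∀ kl ∈ antidiagonal n, y ^ kl.1 / kl.1.factorial *
        (poch (b - a) kl.2 / poch b kl.2 * (-y) ^ kl.2 / kl.2.factorial)
      = (n.choose kl.1 : ℝ) * (poch (b + kl.2) kl.1 * ((-1) ^ kl.2 * poch (b - a) kl.2))
          * (y ^ n / (poch b n * n.factorial)) := by
    rintro ⟨k, l⟩ hkl
    obtain rfl : k + l = n := mem_antidiagonal.mp hkl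
    have hfac : ((k + l).factorial : ℝ) = (k + l).choose k * k.factorial * l.factorial := by
      rw [Nat.choose_symm_add]
      exact_mod_cast (Nat.add_choose_mul_factorial_mul_factorial k l).symm
    have := (poch_pos hb l).ne'
    have := (poch_pos (by positivity : 0 < b + l) k).ne'
    have : ((k + l).choose k : ℝ) ≠ 0 := by exact_mod_cast (Nat.choose_pos (Nat.le_add_right k l)).ne'
    have hpoch : poch b (k + l) = poch b l * poch (b + l) k := by rw [add_comm, poch_add]
    dsimp only
    rw [hpoch, hfac, neg_pow, pow_add]
    field_simp
  rw [Finset.sum_congr rfl hterm, ← Finset.sum_mul, ← poch_sub_eq_sum_antidiagonal, sub_sub_cancel]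
  have := (poch_pos hb n).ne'
  field_simp

/-- Kummer's transformation. -/
lemma hyp1F1_eq_exp_mul_hyp1F1 (a : ℝ) {b : ℝ} (hb : 0 < b) (y : ℝ) :
    hyp1F1 a b y = exp y * hyp1F1 (b - a) b (-y) := by
  have hexp : Summable fun k : ℕ => ‖y ^ k / k.factorial‖ := by
    simpa only [Real.norm_eq_abs] using summable_abs_iff.mpr (Real.summable_pow_div_factorial y)
  have hF : Summable fun n : ℕ => ‖poch (b - a) n / poch b n * (-y) ^ n / n.factorial‖ := by
    simpa only [Real.norm_eq_abs] using
      summable_abs_iff.mpr (summable_hyp1F1_term (b - a) hb (-y))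
  rw [hyp1F1, hyp1F1, Real.exp_eq_exp_ℝ, NormedSpace.exp_eq_tsum_div,
    tsum_mul_tsum_eq_tsum_sum_antidiagonal_of_summable_norm hexp hF]
  exact tsum_congr fun n => (sum_antidiagonal_exp_term_mul_hyp1F1_term a hb y n).symm

section GammaIntegral

variable {s θ : ℝ}

lemma integrableOn_rpow_mul_exp_neg_div (hs : 0 < s) (hθ : 0 < θ) :
    IntegrableOn (fun x : ℝ => x ^ (s - 1) * exp (-x / θ)) (Ioi 0) := by
  refine (integrableOn_rpow_mul_exp_neg_mul_rpow (s := s - 1) (by linarith) one_pos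
    (inv_pos.mpr hθ)).congr_fun (fun x _ => ?_) measurableSet_Ioi
  simp only [rpow_one, neg_mul, ← div_eq_inv_mul, neg_div]

lemma integral_rpow_mul_exp_neg_div (hs : 0 < s) (hθ : 0 < θ) :
    ∫ x in Ioi 0, x ^ (s - 1) * exp (-x / θ) = θ ^ s * Gamma s := by
  simpa [neg_div, div_eq_inv_mul] using integral_rpow_mul_exp_neg_mul_Ioi hs (inv_pos.mpr hθ)

lemma integral_rpow_add_nat_mul_exp_neg_div (hs : 0 < s) (hθ : 0 < θ) (n : ℕ) :
    ∫ x in Ioi 0, x ^ (s + n - 1) * exp (-x / θ) = θ ^ s * Gamma s * (poch s n * θ ^ n) := by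
  rw [integral_rpow_mul_exp_neg_div (by positivity) hθ, Gamma_add_nat_eq_mul_poch hs,
    rpow_add hθ, rpow_natCast]
  ring

theorem integral_rpow_mul_exp_neg_div_mul_hyp1F1 (a : ℝ) {b z : ℝ} (hb : 0 < b) (hs : 0 < s)
    (hθ : 0 < θ) (hzθ : |z * θ| < 1) :
    ∫ x in Ioi 0, x ^ (s - 1) * exp (-x / θ) * hyp1F1 a b (z * x)
      = θ ^ s * Gamma s * hyp2F1 a s b (z * θ) := by
  set c : ℕ → ℝ := fun n => poch a n / poch b n * z ^ n / n.factorial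
  set F : ℕ → ℝ → ℝ := fun n x => c n * (x ^ (s + n - 1) * exp (-x / θ))
  have hc (n : ℕ) : c n * (poch s n * θ ^ n)
      = poch a n * poch s n / poch b n * (z * θ) ^ n / n.factorial := by
    simp only [c, mul_pow]
    ring
  have hseries : ∀ x ∈ Ioi (0 : ℝ),
      x ^ (s - 1) * exp (-x / θ) * hyp1F1 a b (z * x) = ∑' n, F n x := by
    intro x hx
    rw [hyp1F1, ← tsum_mul_left]
    refine tsum_congr fun n => ?_
    simp only [F, c, mul_pow]
    rw [show s + n - 1 = s - 1 + n by ring, rpow_add hx, rpow_natCast]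
    ring
  have hint (n : ℕ) : Integrable (F n) (volume.restrict (Ioi 0)) :=
    (integrableOn_rpow_mul_exp_neg_div (by positivity) hθ).const_mul (c n)
  have hintegral (n : ℕ) : ∫ x in Ioi 0, F n x
      = θ ^ s * Gamma s * (poch a n * poch s n / poch b n * (z * θ) ^ n / n.factorial) := by
    rw [integral_const_mul, integral_rpow_add_nat_mul_exp_neg_div hs hθ, ← hc]
    ring
  have hnorm (n : ℕ) : ∫ x in Ioi 0, ‖F n x‖
      = θ ^ s * Gamma s * |poch a n * poch s n / poch b n * (z * θ) ^ n / n.factorial| := by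
    have hF : ∀ x ∈ Ioi (0 : ℝ), ‖F n x‖ = |c n| * (x ^ (s + n - 1) * exp (-x / θ)) :=
      fun x hx => by
        rw [norm_mul, Real.norm_eq_abs, Real.norm_of_nonneg (by have := rpow_pos_of_pos hx (s + n - 1); positivity)]
    rw [setIntegral_congr_fun measurableSet_Ioi hF, integral_const_mul,
      integral_rpow_add_nat_mul_exp_neg_div hs hθ, ← hc, abs_mul,
      abs_of_pos (mul_pos (poch_pos hs n) (pow_pos hθ n))]
    ring
  have hsummable : Summable fun n => ∫ x in Ioi 0, ‖F n x‖ := by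
    simp only [hnorm]
    exact (summable_abs_iff.mpr (summable_hyp2F1_term a s hb hzθ)).mul_left _
  rw [setIntegral_congr_fun measurableSet_Ioi hseries,
    ← integral_tsum_of_summable_integral_norm hint hsummable, tsum_congr hintegral, tsum_mul_left,
    hyp2F1]

end GammaIntegral

/-- After Kummer's transformation the exponential factors combine, since
`1 / θ₁ - (θ₂ - θ₁) / (θ₁ θ₂) = 1 / θ₂`. -/
lemma rpow_mul_kmuPDF_eq {κ μ m hbar θ1 θ2 : ℝ} (hμ : 0 < μ) (hθ1 : θ1 = hbar / (μ * (1 + κ)))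
    (hθ2 : θ2 = (μ * κ + m) * hbar / (μ * (1 + κ) * m)) (hθ1₀ : θ1 ≠ 0) (hθ2₀ : θ2 ≠ 0)
    (j : ℝ) {x : ℝ} (hx : 0 < x) :
    x ^ j * kmuPDF κ μ m hbar x = θ1 ^ (m - μ) / (θ2 ^ m * Gamma μ) *
      (x ^ (μ + j - 1) * exp (-x / θ2) * hyp1F1 (μ - m) μ (-((θ2 - θ1) / (θ1 * θ2)) * x)) := by
  rw [kmuPDF, ← hθ1, ← hθ2, hyp1F1_eq_exp_mul_hyp1F1 m hμ, neg_mul,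
    show μ + j - 1 = j + (μ - 1) by ring, rpow_add hx,
    show exp (-x / θ2) = exp (-x / θ1) * exp ((θ2 - θ1) / (θ1 * θ2) * x) by
      rw [← exp_add]; congr 1; field_simp; ring]
  ring

/-- The j-th moment of the κ-μ shadowed density:
`∫₀^∞ x^j f(x) dx = (θ₁^(m−μ) Γ(μ+j)/(θ₂^(m−μ−j) Γ(μ))) ₂F₁(μ−m, μ+j; μ; −μκ/m)`. -/
theorem kmu_moment (κ μ m hbar : ℝ) (hκ : 0 < κ) (hμ : 0 < μ) (hm : 0 < m)
    (hhbar : 0 < hbar) (θ1 θ2 : ℝ) (hθ1 : θ1 = hbar / (μ * (1 + κ)))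
    (hθ2 : θ2 = (μ * κ + m) * hbar / (μ * (1 + κ) * m))
    (hconv : μ * κ < m) (j : ℝ) (hj : 0 < j) :
    (∫ x in Set.Ioi (0 : ℝ), x ^ j * kmuPDF κ μ m hbar x)
      = θ1 ^ (m - μ) * Real.Gamma (μ + j) / (θ2 ^ (m - μ - j) * Real.Gamma μ) *
        hyp2F1 (μ - m) (μ + j) μ (-(μ * κ) / m) := by
  have hθ1₀ : 0 < θ1 := by rw [hθ1]; positivity
  have hθ2₀ : 0 < θ2 := by rw [hθ2]; positivity
  have hz : -((θ2 - θ1) / (θ1 * θ2)) * θ2 = -(μ * κ) / m := by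
    rw [hθ1, hθ2]
    field_simp
    ring
  have hzθ : |-(μ * κ) / m| < 1 := by
    rw [abs_div, abs_neg, abs_of_pos (by positivity), abs_of_pos hm, div_lt_one hm]
    exact hconv
  rw [setIntegral_congr_fun measurableSet_Ioi
      fun x hx => rpow_mul_kmuPDF_eq hμ hθ1 hθ2 hθ1₀.ne' hθ2₀.ne' j hx,
    integral_const_mul, integral_rpow_mul_exp_neg_div_mul_hyp1F1 (μ - m) hμ (by positivity) hθ2₀
      (hz ▸ hzθ), hz, sub_sub, rpow_sub hθ2₀]
  have := (Gamma_pos_of_pos hμ).ne'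
  have := (rpow_pos_of_pos hθ2₀ (μ + j)).ne'
  field_simp
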